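/- arXiv:2511.05177 — 6 statements merged into one kernel-verified Lean document; each statement's English description precedes it below -/
import Mathlib

section
/- Let n ≥ 1 and let X, Y : Fin n → ℝ. If indices i ≠ j form an inversion, i.e., (X i − X j)·(Y j − Y i) > 0, then swapping Y i and Y j strictly increases the covariance: cov(X, Y ∘ swap i j) > cov(X, Y). -/
/-- Mean of a sample of `n` real values. -/
noncomputable def sampleMean (n : ℕ) (X : Fin n → ℝ) : ℝ :=
  (1 / (n : ℝ)) * ∑ i, X i

/-- Covariance of two samples of `n` real values. -/
noncomputable def sampleCov (n : ℕ) (X Y : Fin n → ℝ) : ℝ :=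
  (1 / (n : ℝ)) * ∑ i, (X i - sampleMean n X) * (Y i - sampleMean n Y)

/-- Swapping the `Y`-values of an inversion, i.e. a pair of distinct indices with
`(X i − X j)·(Y j − Y i) > 0`, strictly increases the covariance. -/
theorem cov_lt_cov_swap_of_inversion (n : ℕ) (hn : 1 ≤ n) (X Y : Fin n → ℝ)
    (i j : Fin n) (hij : i ≠ j) (hinv : (X i - X j) * (Y j - Y i) > 0) :
    sampleCov n X (Y ∘ Equiv.swap i j) > sampleCov n X Y := by
  have hnpos : (0:ℝ) < 1 / n := by
    have : (0:ℝ) < n := by exact_mod_cast hn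
    positivity
  have hmean : sampleMean n (Y ∘ Equiv.swap i j) = sampleMean n Y := by
    unfold sampleMean
    congr 1
    exact Equiv.sum_comp (Equiv.swap i j) Y
  set μX := sampleMean n X
  set μY := sampleMean n Y
  have hdiff : sampleCov n X (Y ∘ Equiv.swap i j) - sampleCov n X Y
      = (1 / n) * ((X i - X j) * (Y j - Y i)) := by
    unfold sampleCov
    rw [hmean, ← mul_sub, ← Finset.sum_sub_distrib]
    congr 1
    have hsub : ∑ k, ((X k - μX) * ((Y ∘ Equiv.swap i j) k - μY)
        - (X k - μX) * (Y k - μY))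
        = ∑ k ∈ ({i, j} : Finset (Fin n)), ((X k - μX) * ((Y ∘ Equiv.swap i j) k - μY)
        - (X k - μX) * (Y k - μY)) := by
      symm
      apply Finset.sum_subset (Finset.subset_univ _)
      intro k _ hk
      simp only [Finset.mem_insert, Finset.mem_singleton, not_or] at hk
      have : Equiv.swap i j k = k := Equiv.swap_apply_of_ne_of_ne hk.1 hk.2
      simp [Function.comp, this]
    rw [hsub, Finset.sum_pair hij]
    simp [Function.comp, Equiv.swap_apply_left, Equiv.swap_apply_right]
    ring
  have : 0 < sampleCov n X (Y ∘ Equiv.swap i j) - sampleCov n X Y := by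
    rw [hdiff]; exact mul_pos hnpos hinv
  linarith
end

section
/- Let n ≥ 1 and let X, Y : Fin n → ℝ with strictly positive standard deviations σ_X > 0 and σ_Y > 0. If indices i ≠ j satisfy (X i − X j)·(Y j − Y i) > 0, then the Pearson correlation coefficient strictly increases under the swap: PCC(X, Y ∘ swap i j) > PCC(X, Y). -/
/-- Variance of a sample of `n` real values. -/
noncomputable def sampleVar (n : ℕ) (X : Fin n → ℝ) : ℝ :=
  (1 / (n : ℝ)) * ∑ i, (X i - sampleMean n X) ^ 2

/-- Standard deviation (nonnegative square root of the variance). -/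
noncomputable def sampleStdDev (n : ℕ) (X : Fin n → ℝ) : ℝ :=
  Real.sqrt (sampleVar n X)

/-- Pearson correlation coefficient of two samples. -/
noncomputable def samplePCC (n : ℕ) (X Y : Fin n → ℝ) : ℝ :=
  sampleCov n X Y / (sampleStdDev n X * sampleStdDev n Y)

lemma sampleMean_swap (n : ℕ) (Y : Fin n → ℝ) (i j : Fin n) :
    sampleMean n (Y ∘ Equiv.swap i j) = sampleMean n Y := by
  unfold sampleMean
  congr 1
  exact Equiv.sum_comp (Equiv.swap i j) Y

lemma sampleStdDev_swap (n : ℕ) (Y : Fin n → ℝ) (i j : Fin n) :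
    sampleStdDev n (Y ∘ Equiv.swap i j) = sampleStdDev n Y := by
  unfold sampleStdDev sampleVar
  rw [sampleMean_swap]
  congr 2
  exact Equiv.sum_comp (Equiv.swap i j) (fun k => (Y k - sampleMean n Y) ^ 2)

/-- If the standard deviations are strictly positive, swapping the `Y`-values
of an inversion strictly increases the Pearson correlation coefficient. -/
theorem pcc_lt_pcc_swap_of_inversion (n : ℕ) (hn : 1 ≤ n) (X Y : Fin n → ℝ)
    (hX : 0 < sampleStdDev n X) (hY : 0 < sampleStdDev n Y)
    (i j : Fin n) (hij : i ≠ j) (hinv : (X i - X j) * (Y j - Y i) > 0) :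
    samplePCC n X (Y ∘ Equiv.swap i j) > samplePCC n X Y := by
  set μX := sampleMean n X with hμX
  set μY := sampleMean n Y with hμY
  have hcov : sampleCov n X (Y ∘ Equiv.swap i j) - sampleCov n X Y
      = (1 / (n : ℝ)) * ((X i - X j) * (Y j - Y i)) := by
    unfold sampleCov
    rw [sampleMean_swap, ← hμX, ← hμY, ← mul_sub, ← Finset.sum_sub_distrib]
    congr 1
    have hterm : ∀ k, (X k - μX) * ((Y ∘ Equiv.swap i j) k - μY)
        - (X k - μX) * (Y k - μY)
        = (X k - μX) * (Y (Equiv.swap i j k) - Y k) := by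
      intro k; simp only [Function.comp_apply]; ring
    calc ∑ k, ((X k - μX) * ((Y ∘ Equiv.swap i j) k - μY)
          - (X k - μX) * (Y k - μY))
        = ∑ k, (X k - μX) * (Y (Equiv.swap i j k) - Y k) := by
          exact Finset.sum_congr rfl fun k _ => hterm k
      _ = ∑ k ∈ ({i, j} : Finset (Fin n)), (X k - μX) * (Y (Equiv.swap i j k) - Y k) := by
          refine (Finset.sum_subset (Finset.subset_univ _) ?_).symm
          intro k _ hk
          simp only [Finset.mem_insert, Finset.mem_singleton, not_or] at hk
          rw [Equiv.swap_apply_of_ne_of_ne hk.1 hk.2, sub_self, mul_zero]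
      _ = (X i - μX) * (Y (Equiv.swap i j i) - Y i)
            + (X j - μX) * (Y (Equiv.swap i j j) - Y j) := Finset.sum_pair hij
      _ = (X i - X j) * (Y j - Y i) := by
          rw [Equiv.swap_apply_left, Equiv.swap_apply_right]; ring
  have hn' : (0 : ℝ) < 1 / (n : ℝ) := by
    have : (0 : ℝ) < n := by exact_mod_cast hn
    positivity
  have hpos : 0 < sampleCov n X (Y ∘ Equiv.swap i j) - sampleCov n X Y := by
    rw [hcov]; exact mul_pos hn' hinv
  unfold samplePCC
  rw [sampleStdDev_swap]
  rw [gt_iff_lt, div_lt_div_iff_of_pos_right (mul_pos hX hY)]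
  linarith
end

section
/- Let n ≥ 1 and let X, Y : Fin n → ℝ both be nondecreasing in the index, with strictly positive standard deviations σ_X > 0 and σ_Y > 0. Then for every permutation σ of Fin n, PCC(X, Y ∘ σ) ≤ PCC(X, Y); i.e., the Pearson correlation coefficient is maximized, over all reassignments of the Y-values, when Y is sorted in the same order as X. -/
/-- If `X` and `Y` are both nondecreasing in the index and have strictly
positive standard deviations, then no reassignment of the `Y`-values by a
permutation can increase the Pearson correlation coefficient. -/
theorem pcc_perm_le_pcc_of_monotone (n : ℕ) (hn : 1 ≤ n) (X Y : Fin n → ℝ)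
    (hX : Monotone X) (hY : Monotone Y)
    (hsX : 0 < sampleStdDev n X) (hsY : 0 < sampleStdDev n Y)
    (σ : Equiv.Perm (Fin n)) :
    samplePCC n X (Y ∘ σ) ≤ samplePCC n X Y := by

  have hmean : sampleMean n (Y ∘ σ) = sampleMean n Y := by
    simp [sampleMean, Function.comp, Equiv.sum_comp σ Y]
  have hvar : sampleVar n (Y ∘ σ) = sampleVar n Y := by
    simp [sampleVar, hmean, Function.comp,
      Equiv.sum_comp σ (fun j => (Y j - sampleMean n Y) ^ 2)]
  have hstd : sampleStdDev n (Y ∘ σ) = sampleStdDev n Y := by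
    simp [sampleStdDev, hvar]
  have hcov : sampleCov n X (Y ∘ σ) ≤ sampleCov n X Y := by
    unfold sampleCov
    rw [hmean]
    have hn0 : (0:ℝ) ≤ 1 / (n:ℝ) := by positivity
    refine mul_le_mul_of_nonneg_left ?_ hn0
    have hmono : Monovary (fun i => X i - sampleMean n X)
        (fun i => Y i - sampleMean n Y) := by
      have h1 : Monotone fun i => X i - sampleMean n X :=
        fun a b hab => sub_le_sub_right (hX hab) _
      have h2 : Monotone fun i => Y i - sampleMean n Y :=
        fun a b hab => sub_le_sub_right (hY hab) _
      exact Monotone.monovary h1 h2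
    simpa [smul_eq_mul, Function.comp] using hmono.sum_smul_comp_perm_le_sum_smul (σ := σ)
  unfold samplePCC
  rw [hstd]
  exact div_le_div_of_nonneg_right hcov (mul_pos hsX hsY).le |>.trans_eq rfl
end

section
/- Let n ≥ 1 and let X, Y : Fin n → ℝ both be strictly increasing in the index. Then for any pair of indices i < j, swapping Y i and Y j strictly decreases the covariance: cov(X, Y ∘ swap i j) < cov(X, Y). -/
/-- If `X` and `Y` are both strictly increasing in the index, then swapping the
`Y`-values of any pair of indices `i < j` strictly decreases the covariance. -/
theorem cov_swap_lt_cov_of_strictMono (n : ℕ) (hn : 1 ≤ n) (X Y : Fin n → ℝ)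
    (hX : StrictMono X) (hY : StrictMono Y) (i j : Fin n) (hij : i < j) :
    sampleCov n X (Y ∘ Equiv.swap i j) < sampleCov n X Y := by
  have hne : i ≠ j := ne_of_lt hij
  have hnpos : (0:ℝ) < n := by positivity
  have hmean : sampleMean n (Y ∘ Equiv.swap i j) = sampleMean n Y := by
    unfold sampleMean
    congr 1
    exact Equiv.sum_comp (Equiv.swap i j) Y
  set μX := sampleMean n X
  set μY := sampleMean n Y
  have key : sampleCov n X Y - sampleCov n X (Y ∘ Equiv.swap i j)
      = (1 / (n:ℝ)) * ((X j - X i) * (Y j - Y i)) := by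
    unfold sampleCov
    rw [hmean]
    rw [← mul_sub, ← Finset.sum_sub_distrib]
    congr 1
    have hsupp : ∀ k ∈ Finset.univ, k ∉ ({i, j} : Finset (Fin n)) →
        (X k - μX) * (Y k - μY) - (X k - μX) * ((Y ∘ Equiv.swap i j) k - μY) = 0 := by
      intro k _ hk
      simp only [Finset.mem_insert, Finset.mem_singleton, not_or] at hk
      rw [Function.comp_apply, Equiv.swap_apply_of_ne_of_ne hk.1 hk.2]
      ring
    rw [← Finset.sum_subset (Finset.subset_univ ({i, j} : Finset (Fin n))) hsupp]
    rw [Finset.sum_pair hne]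
    simp only [Function.comp_apply, Equiv.swap_apply_left, Equiv.swap_apply_right]
    ring
  have hpos : (0:ℝ) < (1 / (n:ℝ)) * ((X j - X i) * (Y j - Y i)) := by
    have := hX hij
    have := hY hij
    have : (0:ℝ) < (X j - X i) * (Y j - Y i) := by
      apply mul_pos <;> linarith
    positivity
  linarith [key]
end

section
/- Let p₀₀, p₀₁, p₁₀, p₁₁ be strictly positive reals summing to 1, regarded as a joint distribution on {0,1}×{0,1}, with marginals a₀ = p₀₀ + p₀₁, a₁ = p₁₀ + p₁₁, b₀ = p₀₀ + p₁₀, b₁ = p₀₁ + p₁₁. For ε ∈ ℝ define the perturbed table q(ε) = (p₀₀ + ε, p₀₁ − ε, p₁₀ − ε, p₁₁ + ε). Then: (i) for every ε, q(ε) has the same marginals a₀, a₁, b₀, b₁ as p; and (ii) the function MI(ε) = ∑_{a,b ∈ {0,1}} q(ε)_{ab} · log( q(ε)_{ab} / (a_a · b_b) ) is differentiable at ε = 0 with derivative log( (p₀₀ · p₁₁) / (p₀₁ · p₁₀) ). -/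
/-- Mutual information of the `ε`-perturbed 2×2 table
`q(ε) = (p₀₀+ε, p₀₁−ε, p₁₀−ε, p₁₁+ε)`, computed against the (unchanged)
marginals `a₀ = p₀₀+p₀₁`, `a₁ = p₁₀+p₁₁`, `b₀ = p₀₀+p₁₀`, `b₁ = p₀₁+p₁₁`. -/
noncomputable def mi2x2 (p00 p01 p10 p11 ε : ℝ) : ℝ :=
  (p00 + ε) * Real.log ((p00 + ε) / ((p00 + p01) * (p00 + p10))) +
  (p01 - ε) * Real.log ((p01 - ε) / ((p00 + p01) * (p01 + p11))) +
  (p10 - ε) * Real.log ((p10 - ε) / ((p10 + p11) * (p00 + p10))) +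
  (p11 + ε) * Real.log ((p11 + ε) / ((p10 + p11) * (p01 + p11)))

/-!
A cell `q` with marginal product `c` contributes `q log (q / c)`, whose derivative in `q` is
`log (q / c) + 1`. The perturbation raises the diagonal cells and lowers the off-diagonal ones,
so the constants `1` cancel; every marginal occurs in exactly one diagonal and one off-diagonal
denominator, so the marginals cancel too, leaving the log odds ratio.
-/

open Real

theorem hasDerivAt_mul_log_div {x c : ℝ} (hx : x ≠ 0) (hc : c ≠ 0) :
    HasDerivAt (fun y => y * log (y / c)) (log (x / c) + 1) x := by
  refine ((hasDerivAt_id' x).mul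
    (((hasDerivAt_id' x).div_const c).log (div_ne_zero hx hc))).congr_deriv ?_
  field_simp

theorem hasDerivAt_add_mul_log_div {p c : ℝ} (hp : p ≠ 0) (hc : c ≠ 0) :
    HasDerivAt (fun ε => (p + ε) * log ((p + ε) / c)) (log (p / c) + 1) 0 := by
  simpa using (hasDerivAt_mul_log_div (x := p + 0) (by simpa using hp) hc).comp_const_add p 0

theorem hasDerivAt_sub_mul_log_div {p c : ℝ} (hp : p ≠ 0) (hc : c ≠ 0) :
    HasDerivAt (fun ε => (p - ε) * log ((p - ε) / c)) (-(log (p / c) + 1)) 0 := by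
  simpa using (hasDerivAt_mul_log_div (x := p - 0) (by simpa using hp) hc).comp_const_sub p 0

theorem log_odds_ratio_div_marginals {p00 p01 p10 p11 a0 a1 b0 b1 : ℝ} (h00 : p00 ≠ 0)
    (h01 : p01 ≠ 0) (h10 : p10 ≠ 0) (h11 : p11 ≠ 0) (ha0 : a0 ≠ 0) (ha1 : a1 ≠ 0)
    (hb0 : b0 ≠ 0) (hb1 : b1 ≠ 0) :
    log (p00 / (a0 * b0)) - log (p01 / (a0 * b1)) - log (p10 / (a1 * b0)) +
      log (p11 / (a1 * b1)) = log (p00 * p11 / (p01 * p10)) := by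
  have hodds : p00 * p11 / (p01 * p10) =
      p00 / (a0 * b0) * (p11 / (a1 * b1)) / (p01 / (a0 * b1) * (p10 / (a1 * b0))) := by
    field_simp
  rw [hodds, log_div (x := _ * _) (by positivity) (by positivity),
    log_mul (x := p00 / _) (by positivity) (by positivity),
    log_mul (x := p01 / _) (by positivity) (by positivity)]
  ring

theorem mi2x2_marginals_and_hasDerivAt_general (p00 p01 p10 p11 : ℝ)
    (h00 : 0 < p00) (h01 : 0 < p01) (h10 : 0 < p10) (h11 : 0 < p11) :
    (∀ ε : ℝ,
      (p00 + ε) + (p01 - ε) = p00 + p01 ∧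
      (p10 - ε) + (p11 + ε) = p10 + p11 ∧
      (p00 + ε) + (p10 - ε) = p00 + p10 ∧
      (p01 - ε) + (p11 + ε) = p01 + p11) ∧
    HasDerivAt (mi2x2 p00 p01 p10 p11)
      (Real.log ((p00 * p11) / (p01 * p10))) 0 := by
  refine ⟨fun ε => ⟨by ring, by ring, by ring, by ring⟩, ?_⟩
  have hMI := (((hasDerivAt_add_mul_log_div (c := (p00 + p01) * (p00 + p10)) h00.ne'
    (by positivity)).add (hasDerivAt_sub_mul_log_div (c := (p00 + p01) * (p01 + p11)) h01.ne'
    (by positivity))).add (hasDerivAt_sub_mul_log_div (c := (p10 + p11) * (p00 + p10)) h10.ne'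
    (by positivity))).add (hasDerivAt_add_mul_log_div (c := (p10 + p11) * (p01 + p11)) h11.ne'
    (by positivity))
  rw [← log_odds_ratio_div_marginals h00.ne' h01.ne' h10.ne' h11.ne'
    (a0 := p00 + p01) (a1 := p10 + p11) (b0 := p00 + p10) (b1 := p01 + p11)
    (by positivity) (by positivity) (by positivity) (by positivity)]
  exact hMI.congr_deriv (by ring)

/-- For a strictly positive 2×2 joint distribution, the diagonal perturbation
`q(ε)` preserves both marginals for every `ε`, and the perturbed mutual
information `MI(ε)` is differentiable at `ε = 0` with derivative
`log((p₀₀·p₁₁)/(p₀₁·p₁₀))`. -/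
theorem mi2x2_marginals_and_hasDerivAt (p00 p01 p10 p11 : ℝ)
    (h00 : 0 < p00) (h01 : 0 < p01) (h10 : 0 < p10) (h11 : 0 < p11)
    (hsum : p00 + p01 + p10 + p11 = 1) :
    (∀ ε : ℝ,
      (p00 + ε) + (p01 - ε) = p00 + p01 ∧
      (p10 - ε) + (p11 + ε) = p10 + p11 ∧
      (p00 + ε) + (p10 - ε) = p00 + p10 ∧
      (p01 - ε) + (p11 + ε) = p01 + p11) ∧
    HasDerivAt (mi2x2 p00 p01 p10 p11)
      (Real.log ((p00 * p11) / (p01 * p10))) 0 :=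
  mi2x2_marginals_and_hasDerivAt_general p00 p01 p10 p11 h00 h01 h10 h11
end

section
/- Let p₀₀, p₀₁, p₁₀, p₁₁ be strictly positive reals summing to 1 with marginals a₀ = p₀₀ + p₀₁, a₁ = p₁₀ + p₁₁, b₀ = p₀₀ + p₁₀, b₁ = p₀₁ + p₁₁, and for ε ∈ ℝ let q(ε) = (p₀₀ + ε, p₀₁ − ε, p₁₀ − ε, p₁₁ + ε) and MI(ε) = ∑_{a,b} q(ε)_{ab} · log( q(ε)_{ab} / (a_a · b_b) ). If p₀₀ · p₁₁ > p₀₁ · p₁₀ then there exists ε₀ > 0 such that MI(ε) > MI(0) for all 0 < ε < ε₀; if p₀₀ · p₁₁ < p₀₁ · p₁₀ then there exists ε₀ > 0 such that MI(ε) < MI(0) for all 0 < ε < ε₀. Hence the same margin-preserving diagonal mass move can either increase or decrease mutual information depending on the joint distribution. -/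
open Filter Topology

theorem HasDerivAt.eventually_nhdsGT_lt_of_pos {f : ℝ → ℝ} {f' x : ℝ} (hf : HasDerivAt f f' x)
    (hf' : 0 < f') : ∀ᶠ y in 𝓝[>] x, f x < f y := by
  have hslope : Tendsto (slope f x) (𝓝[>] x) (𝓝 f') :=
    (hasDerivAt_iff_tendsto_slope.1 hf).mono_left
      (nhdsWithin_mono _ fun y (hy : x < y) => hy.ne')
  filter_upwards [hslope.eventually (eventually_gt_nhds hf'), self_mem_nhdsWithin]
    with y hpos (hxy : x < y)
  rw [slope_def_field] at hpos
  exact sub_pos.1 ((div_pos_iff_of_pos_right (sub_pos.2 hxy)).1 hpos)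

theorem HasDerivAt.eventually_nhdsGT_gt_of_neg {f : ℝ → ℝ} {f' x : ℝ} (hf : HasDerivAt f f' x)
    (hf' : f' < 0) : ∀ᶠ y in 𝓝[>] x, f y < f x := by
  filter_upwards [hf.neg.eventually_nhdsGT_lt_of_pos (neg_pos.2 hf')] with y hy
  exact neg_lt_neg_iff.1 hy

theorem exists_pos_forall_of_eventually_nhdsGT_zero {P : ℝ → Prop} (h : ∀ᶠ ε in 𝓝[>] 0, P ε) :
    ∃ ε₀ > 0, ∀ ε : ℝ, 0 < ε → ε < ε₀ → P ε := by
  obtain ⟨ε₀, hε₀, hsub⟩ := mem_nhdsGT_iff_exists_Ioo_subset.1 h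
  exact ⟨ε₀, hε₀, fun ε h0 h1 => hsub ⟨h0, h1⟩⟩

theorem HasDerivAt.mul_log_div {u : ℝ → ℝ} {u' x : ℝ} (hu : HasDerivAt u u' x) (m : ℝ)
    (hux : u x ≠ 0) (hm : m ≠ 0) :
    HasDerivAt (fun y => u y * Real.log (u y / m)) (u' * (Real.log (u x / m) + 1)) x := by
  refine (hu.mul ((hu.div_const m).log (div_ne_zero hux hm))).congr_deriv ?_
  field_simp

theorem hasDerivAt_mi2x2_zero {p00 p01 p10 p11 : ℝ}
    (h00 : 0 < p00) (h01 : 0 < p01) (h10 : 0 < p10) (h11 : 0 < p11) :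
    HasDerivAt (mi2x2 p00 p01 p10 p11) (Real.log (p00 * p11 / (p01 * p10))) 0 := by
  have hadd (p m : ℝ) (hp : 0 < p) (hm : 0 < m) :=
    ((hasDerivAt_id' 0).const_add p).mul_log_div m (by simpa using hp.ne') hm.ne'
  have hsub (p m : ℝ) (hp : 0 < p) (hm : 0 < m) :=
    ((hasDerivAt_id' 0).const_sub p).mul_log_div m (by simpa using hp.ne') hm.ne'
  refine ((((hadd p00 ((p00 + p01) * (p00 + p10)) h00 (by positivity)).add
    (hsub p01 ((p00 + p01) * (p01 + p11)) h01 (by positivity))).add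
    (hsub p10 ((p10 + p11) * (p00 + p10)) h10 (by positivity))).add
    (hadd p11 ((p10 + p11) * (p01 + p11)) h11 (by positivity))).congr_deriv ?_
  simp only [add_zero, sub_zero]
  rw [Real.log_div, Real.log_div, Real.log_div, Real.log_div, Real.log_div, Real.log_mul,
    Real.log_mul, Real.log_mul, Real.log_mul, Real.log_mul, Real.log_mul]
  · ring
  all_goals positivity

theorem mi2x2_sign_near_zero_general (p00 p01 p10 p11 : ℝ)
    (h00 : 0 < p00) (h01 : 0 < p01) (h10 : 0 < p10) (h11 : 0 < p11) :
    (p00 * p11 > p01 * p10 →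
      ∃ ε₀ > 0, ∀ ε : ℝ, 0 < ε → ε < ε₀ →
        mi2x2 p00 p01 p10 p11 ε > mi2x2 p00 p01 p10 p11 0) ∧
    (p00 * p11 < p01 * p10 →
      ∃ ε₀ > 0, ∀ ε : ℝ, 0 < ε → ε < ε₀ →
        mi2x2 p00 p01 p10 p11 ε < mi2x2 p00 p01 p10 p11 0) := by
  have hderiv := hasDerivAt_mi2x2_zero h00 h01 h10 h11
  have hden : 0 < p01 * p10 := by positivity
  refine ⟨fun hgt => ?_, fun hlt => ?_⟩
  · have hodds : 0 < Real.log (p00 * p11 / (p01 * p10)) :=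
      Real.log_pos ((one_lt_div hden).2 hgt)
    exact exists_pos_forall_of_eventually_nhdsGT_zero (hderiv.eventually_nhdsGT_lt_of_pos hodds)
  · have hodds : Real.log (p00 * p11 / (p01 * p10)) < 0 :=
      Real.log_neg (by positivity) ((div_lt_one hden).2 hlt)
    exact exists_pos_forall_of_eventually_nhdsGT_zero (hderiv.eventually_nhdsGT_gt_of_neg hodds)

/-- For a strictly positive 2×2 joint distribution, the diagonal mass move
strictly increases mutual information for small `ε > 0` when
`p₀₀·p₁₁ > p₀₁·p₁₀`, and strictly decreases it when `p₀₀·p₁₁ < p₀₁·p₁₀`: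
the same local move can either increase or decrease MI. -/
theorem mi2x2_sign_near_zero (p00 p01 p10 p11 : ℝ)
    (h00 : 0 < p00) (h01 : 0 < p01) (h10 : 0 < p10) (h11 : 0 < p11)
    (hsum : p00 + p01 + p10 + p11 = 1) :
    (p00 * p11 > p01 * p10 →
      ∃ ε₀ > 0, ∀ ε : ℝ, 0 < ε → ε < ε₀ →
        mi2x2 p00 p01 p10 p11 ε > mi2x2 p00 p01 p10 p11 0) ∧
    (p00 * p11 < p01 * p10 →
      ∃ ε₀ > 0, ∀ ε : ℝ, 0 < ε → ε < ε₀ →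
        mi2x2 p00 p01 p10 p11 ε < mi2x2 p00 p01 p10 p11 0) :=
  mi2x2_sign_near_zero_general p00 p01 p10 p11 h00 h01 h10 h11
end
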